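/- Let g be a real Lie algebra with an Ad-invariant inner product and let h ⊂ g be an abelian Lie subalgebra. With Ψ(A) = A^h (orthogonal projection onto h), the expression ⟨[X,ΨY]+[ΨX,Y],[ΨX,ΨY]⟩ + ⟨[ΨX,X],Ψ[ΨY,Y]⟩ − ⟨[X,ΨY],Ψ[X,ΨY]⟩ − ⟨[X,ΨY],Ψ[ΨX,Y]⟩ − ⟨[ΨX,Y],Ψ[ΨX,Y]⟩ vanishes for all commuting X, Y ∈ g. -/

import Mathlib

open RealInnerProductSpace

/-
Each of the five terms vanishes separately, because `h` is abelian: the first contains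
`⁅ΨX, ΨY⁆ = 0`, and each other one pairs a bracket `⁅A, ΨB⁆` (or `⁅ΨB, A⁆`) with some `ΨC ∈ h`,
and by invariance `⟪⁅A, ΨB⁆, ΨC⟫ = ⟪A, ⁅ΨB, ΨC⁆⟫ = 0`.
-/

section InvariantInner

variable {g : Type*} [LieRing g] [NormedAddCommGroup g] [InnerProductSpace ℝ g]
  (hinv : ∀ A B C : g, ⟪⁅A, B⁆, C⟫ = ⟪A, ⁅B, C⁆⟫)
include hinv

/- This `0` is the zero of the `LieRing` structure, which need not be that of the independent
`NormedAddCommGroup` structure, so `inner_zero_right` does not apply directly. -/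
theorem inner_lie_zero_right (A : g) : ⟪A, (0 : g)⟫ = 0 := by
  have hzero_left : ∀ C : g, ⟪(0 : g), C⟫ = ⟪(0 : g), (0 : g)⟫ := fun C =>
    calc ⟪(0 : g), C⟫ = ⟪⁅(0 : g), (0 : g)⁆, C⟫ := by rw [zero_lie]
      _ = ⟪(0 : g), ⁅(0 : g), C⁆⟫ := hinv _ _ _
      _ = ⟪(0 : g), (0 : g)⟫ := by rw [zero_lie]
  rw [real_inner_comm, hzero_left A]
  exact (hzero_left _).symm.trans (inner_zero_right _)

theorem inner_lie_left_eq_zero_of_lie_eq_zero (A : g) {B C : g} (hBC : ⁅B, C⁆ = 0) :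
    ⟪⁅A, B⁆, C⟫ = 0 := by
  rw [hinv, hBC, inner_lie_zero_right hinv]

theorem inner_lie_right_eq_zero_of_lie_eq_zero (A : g) {B C : g} (hBC : ⁅B, C⁆ = 0) :
    ⟪⁅B, A⁆, C⟫ = 0 := by
  rw [hinv, real_inner_comm, hinv, ← lie_skew, hBC, neg_zero, inner_lie_zero_right hinv]

end InvariantInner

theorem stmt_5_general {g : Type*} [LieRing g] [LieAlgebra ℝ g]
    [NormedAddCommGroup g] [InnerProductSpace ℝ g]
    (hinv : ∀ A B C : g, ⟪⁅A, B⁆, C⟫ = ⟪A, ⁅B, C⁆⟫)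
    (h : LieSubalgebra ℝ g)
    (hab : ∀ A ∈ h, ∀ B ∈ h, ⁅A, B⁆ = (0 : g))
    (Ψ : g →ₗ[ℝ] g)
    (hP1 : ∀ A : g, Ψ A ∈ h)
    (X Y : g) :
    ⟪⁅X, Ψ Y⁆ + ⁅Ψ X, Y⁆, ⁅Ψ X, Ψ Y⁆⟫ + ⟪⁅Ψ X, X⁆, Ψ ⁅Ψ Y, Y⁆⟫
      - ⟪⁅X, Ψ Y⁆, Ψ ⁅X, Ψ Y⁆⟫ - ⟪⁅X, Ψ Y⁆, Ψ ⁅Ψ X, Y⁆⟫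
      - ⟪⁅Ψ X, Y⁆, Ψ ⁅Ψ X, Y⁆⟫ = 0 := by
  have hΨ : ∀ A B : g, ⁅Ψ A, Ψ B⁆ = 0 := fun A B => hab _ (hP1 A) _ (hP1 B)
  rw [hΨ, inner_lie_zero_right hinv,
    inner_lie_right_eq_zero_of_lie_eq_zero hinv X (hΨ X _),
    inner_lie_left_eq_zero_of_lie_eq_zero hinv X (hΨ Y _),
    inner_lie_left_eq_zero_of_lie_eq_zero hinv X (hΨ Y _),
    inner_lie_right_eq_zero_of_lie_eq_zero hinv Y (hΨ X _)]
  ring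

/-- With `Ψ` the orthogonal projection onto an abelian subalgebra `h`,
the third-derivative expression `(1/6)κ'''(0)` vanishes for all commuting pairs. -/
theorem stmt_5 {g : Type*} [LieRing g] [LieAlgebra ℝ g]
    [NormedAddCommGroup g] [InnerProductSpace ℝ g]
    (hinv : ∀ A B C : g, ⟪⁅A, B⁆, C⟫ = ⟪A, ⁅B, C⁆⟫)
    (h : LieSubalgebra ℝ g)
    (hab : ∀ A ∈ h, ∀ B ∈ h, ⁅A, B⁆ = (0 : g))
    (Ψ : g →ₗ[ℝ] g)
    (hP1 : ∀ A : g, Ψ A ∈ h)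
    (hP2 : ∀ A : g, ∀ B ∈ h, ⟪A - Ψ A, B⟫ = 0)
    (X Y : g) (hXY : ⁅X, Y⁆ = 0) :
    ⟪⁅X, Ψ Y⁆ + ⁅Ψ X, Y⁆, ⁅Ψ X, Ψ Y⁆⟫ + ⟪⁅Ψ X, X⁆, Ψ ⁅Ψ Y, Y⁆⟫
      - ⟪⁅X, Ψ Y⁆, Ψ ⁅X, Ψ Y⁆⟫ - ⟪⁅X, Ψ Y⁆, Ψ ⁅Ψ X, Y⁆⟫
      - ⟪⁅Ψ X, Y⁆, Ψ ⁅Ψ X, Y⁆⟫ = 0 :=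
  stmt_5_general hinv h hab Ψ hP1 X Y
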